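/- For φ ∈ (0, π] let β_φ be the tangential pair of circles and set ν = e₁ cos(φ/2) + e₃ sin(φ/2). For ξ with 0 < |ξ| ≤ 1/(16π), define χ_ξ := β̃_{φ,1}(ξ) − β̃_{φ,2}(ξ), where β̃_{φ,1}(ξ) = β_φ(arcsin(4πξ)/(4π)) and β̃_{φ,2}(ξ) = β_φ(arcsin(4πξ)/(4π) + 1/2). Then χ_ξ ⊥ ν, χ_{−ξ} = −χ_ξ, and |χ_ξ| = (1/4π)(1 − √(1 − (4πξ)²)) · 2 sin(φ/2) ≥ 4πξ² sin(φ/2). -/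
import Mathlib


open Real Set
open scoped RealInnerProductSpace

/-- The `i`-th standard unit vector of `ℝ³`. -/
noncomputable def unitVec (i : Fin 3) : EuclideanSpace ℝ (Fin 3) :=
  EuclideanSpace.single i 1

/-- The tangential pair of circles `β_φ : ℝ/ℤ → ℝ³` with opening angle `φ`:
two circles of radius `1/(4π)` through the origin with common tangent direction `e₂`,
the first traversed for `t mod 1 ∈ [0,1/2]`, the second (rotated by angle `φ` about the
`e₂`-axis) for `t mod 1 ∈ [1/2,1]`. -/
noncomputable def tpc (φ : ℝ) (t : ℝ) : EuclideanSpace ℝ (Fin 3) :=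
  if Int.fract t ≤ 1/2 then
    (4*π)⁻¹ • ((1 - Real.cos (4*π*t)) • unitVec 0 - Real.sin (4*π*t) • unitVec 1)
  else
    (4*π)⁻¹ • ((1 - Real.cos (4*π*t)) • (Real.cos φ • unitVec 0 + Real.sin φ • unitVec 2)
                - Real.sin (4*π*t) • unitVec 1)

/-- The two strands of `β_φ` written as graphs over the `e₂`-axis:
`β̃_{φ,1}(ξ) = β_φ(arcsin(4πξ)/(4π))` and `β̃_{φ,2}(ξ) = β_φ(arcsin(4πξ)/(4π) + 1/2)`. -/
noncomputable def tildeTpc1 (φ ξ : ℝ) : EuclideanSpace ℝ (Fin 3) :=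
  tpc φ (Real.arcsin (4*π*ξ) / (4*π))

noncomputable def tildeTpc2 (φ ξ : ℝ) : EuclideanSpace ℝ (Fin 3) :=
  tpc φ (Real.arcsin (4*π*ξ) / (4*π) + 1/2)

/-- The connecting vector `χ_ξ = β̃_{φ,1}(ξ) − β̃_{φ,2}(ξ)` between the two strands. -/
noncomputable def chiVec (φ ξ : ℝ) : EuclideanSpace ℝ (Fin 3) :=
  tildeTpc1 φ ξ - tildeTpc2 φ ξ

/-- Explicit formula for the connecting vector. -/
lemma chi_eq_aux (φ ξ : ℝ) (hξ0 : ξ ≠ 0) :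
    chiVec φ ξ = (Real.sign ξ * ((4*π)⁻¹ * (1 - Real.sqrt (1 - (4*π*ξ)^2)))) •
      ((1 - Real.cos φ) • unitVec 0 - Real.sin φ • unitVec 2) := by
  have hπ := Real.pi_pos
  set x := 4*π*ξ with hxdef
  set θ := Real.arcsin x with hθdef
  have habs : |θ| ≤ π/2 :=
    abs_le.mpr ⟨Real.neg_pi_div_two_le_arcsin x, Real.arcsin_le_pi_div_two x⟩
  have h4π : (4*π) ≠ 0 := by positivity
  have harg1 : 4*π*(θ/(4*π)) = θ := by field_simp
  have harg2 : 4*π*(θ/(4*π) + 1/2) = θ + 2*π := by field_simp; ring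
  have hcosθ : Real.cos θ = Real.sqrt (1 - x^2) := Real.cos_arcsin x
  rcases hξ0.lt_or_gt with hneg | hpos
  · -- ξ < 0
    have hx0 : x < 0 := by
      rw [hxdef]; nlinarith
    have hθ0 : θ < 0 := by
      have : 0 < Real.arcsin (-x) := Real.arcsin_pos.mpr (by linarith)
      rw [Real.arcsin_neg] at this
      rw [hθdef]; linarith
    have ht1 : -(1/8 : ℝ) ≤ θ/(4*π) := by
      rw [neg_le, ← neg_div, div_le_iff₀ (by positivity : (0:ℝ) < 4*π)]
      have := (abs_le.mp habs).1
      nlinarith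
    have ht1' : θ/(4*π) < 0 := div_neg_of_neg_of_pos hθ0 (by positivity)
    have hf1 : Int.fract (θ/(4*π)) = θ/(4*π) + 1 := by
      rw [← Int.fract_add_one, Int.fract_eq_self]
      constructor <;> nlinarith
    have hf2 : Int.fract (θ/(4*π) + 1/2) = θ/(4*π) + 1/2 := by
      rw [Int.fract_eq_self]
      constructor <;> nlinarith
    have hb1 : ¬ (Int.fract (θ/(4*π)) ≤ 1/2) := by rw [hf1]; nlinarith
    have hb2 : Int.fract (θ/(4*π) + 1/2) ≤ 1/2 := by rw [hf2]; nlinarith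
    have hsign : Real.sign ξ = -1 := Real.sign_of_neg hneg
    unfold chiVec tildeTpc1 tildeTpc2 tpc
    rw [← hxdef, ← hθdef, if_neg hb1, if_pos hb2, harg1, harg2,
      Real.cos_add_two_pi, Real.sin_add_two_pi, hsign, ← hcosθ]
    module
  · -- ξ > 0
    have hx0 : 0 < x := by rw [hxdef]; nlinarith
    have hθ0 : 0 < θ := Real.arcsin_pos.mpr hx0
    have ht1 : θ/(4*π) ≤ 1/8 := by
      rw [div_le_iff₀ (by positivity)]
      have := (abs_le.mp habs).2
      nlinarith
    have ht1' : 0 < θ/(4*π) := div_pos hθ0 (by positivity)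
    have hf1 : Int.fract (θ/(4*π)) = θ/(4*π) := by
      rw [Int.fract_eq_self]; constructor <;> nlinarith
    have hf2 : Int.fract (θ/(4*π) + 1/2) = θ/(4*π) + 1/2 := by
      rw [Int.fract_eq_self]; constructor <;> nlinarith
    have hb1 : Int.fract (θ/(4*π)) ≤ 1/2 := by rw [hf1]; nlinarith
    have hb2 : ¬ (Int.fract (θ/(4*π) + 1/2) ≤ 1/2) := by rw [hf2]; nlinarith
    have hsign : Real.sign ξ = 1 := Real.sign_of_pos hpos
    unfold chiVec tildeTpc1 tildeTpc2 tpc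
    rw [← hxdef, ← hθdef, if_pos hb1, if_neg hb2, harg1, harg2,
      Real.cos_add_two_pi, Real.sin_add_two_pi, hsign, ← hcosθ]
    module

lemma inner_aux (φ : ℝ) :
    ⟪(1 - Real.cos φ) • unitVec 0 - Real.sin φ • unitVec 2,
      Real.cos (φ/2) • unitVec 0 + Real.sin (φ/2) • unitVec 2⟫ = 0 := by
  have hs : Real.sin φ = 2*Real.sin (φ/2)*Real.cos (φ/2) := by
    have h1 := Real.sin_two_mul (φ/2)
    rw [show 2*(φ/2) = φ by ring] at h1; linarith
  have hc : Real.cos φ = 1 - 2*Real.sin (φ/2)^2 := by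
    have h1 := Real.cos_two_mul (φ/2)
    have h2 := Real.sin_sq_add_cos_sq (φ/2)
    rw [show 2*(φ/2) = φ by ring] at h1; nlinarith
  simp only [unitVec, inner_sub_left, inner_add_right, real_inner_smul_left,
    real_inner_smul_right, EuclideanSpace.inner_single_left, EuclideanSpace.single_apply,
    RCLike.inner_apply, starRingEnd_apply, star_one, star_trivial, mul_one, mul_zero,
    sub_zero, reduceIte,
    show ((0:Fin 3) = 2) = False from by decide, show ((2:Fin 3) = 0) = False from by decide,
    if_false, if_true, eq_self_iff_true]
  rw [hs, hc]; ring

lemma norm_aux (φ : ℝ) (hφ : φ ∈ Ioc (0:ℝ) π) :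
    ‖(1 - Real.cos φ) • unitVec 0 - Real.sin φ • unitVec 2‖ = 2 * Real.sin (φ/2) := by
  have hs : Real.sin φ = 2*Real.sin (φ/2)*Real.cos (φ/2) := by
    have h1 := Real.sin_two_mul (φ/2)
    rw [show 2*(φ/2) = φ by ring] at h1; linarith
  have hc : Real.cos φ = 1 - 2*Real.sin (φ/2)^2 := by
    have h1 := Real.cos_two_mul (φ/2)
    have h2 := Real.sin_sq_add_cos_sq (φ/2)
    rw [show 2*(φ/2) = φ by ring] at h1; nlinarith
  have hs0 : 0 ≤ Real.sin (φ/2) :=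
    Real.sin_nonneg_of_nonneg_of_le_pi (by linarith [hφ.1]) (by linarith [hφ.2, Real.pi_pos])
  rw [@norm_eq_sqrt_real_inner]
  simp only [unitVec, inner_sub_left, inner_sub_right, real_inner_smul_left,
    real_inner_smul_right, EuclideanSpace.inner_single_left, EuclideanSpace.single_apply,
    RCLike.inner_apply, starRingEnd_apply, star_one, star_trivial, mul_one, mul_zero,
    sub_zero, reduceIte,
    show ((0:Fin 3) = 2) = False from by decide, show ((2:Fin 3) = 0) = False from by decide,
    if_false, if_true, eq_self_iff_true]
  have key : ∀ X : ℝ, X = (2*Real.sin (φ/2))^2 → Real.sqrt X = 2*Real.sin (φ/2) := by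
    intro X h; rw [h]; exact Real.sqrt_sq (by linarith)
  apply key
  rw [hs, hc]
  linear_combination (4*Real.sin (φ/2)^2) * (Real.sin_sq_add_cos_sq (φ/2))

/-- **The strand-connecting vectors of a tangential pair of circles.**
For `φ ∈ (0,π]`, `ν = e₁ cos(φ/2) + e₃ sin(φ/2)`, and `0 < |ξ| ≤ 1/(16π)` one has
`χ_ξ ⊥ ν`, `χ_{−ξ} = −χ_ξ`, and
`|χ_ξ| = (1/4π)(1 − √(1 − (4πξ)²))·2 sin(φ/2) ≥ 4πξ² sin(φ/2)`. -/
theorem stmt_18 (φ : ℝ) (hφ : φ ∈ Ioc (0:ℝ) π)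
    (ξ : ℝ) (hξ0 : ξ ≠ 0) (hξ : |ξ| ≤ 1/(16*π)) :
    ⟪chiVec φ ξ, Real.cos (φ/2) • unitVec 0 + Real.sin (φ/2) • unitVec 2⟫ = 0 ∧
    chiVec φ (-ξ) = -chiVec φ ξ ∧
    ‖chiVec φ ξ‖ = (4*π)⁻¹ * (1 - Real.sqrt (1 - (4*π*ξ)^2)) * (2 * Real.sin (φ/2)) ∧
    4*π*ξ^2 * Real.sin (φ/2) ≤ ‖chiVec φ ξ‖ := by
  have hπ := Real.pi_pos
  have hs0 : 0 < Real.sin (φ/2) :=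
    Real.sin_pos_of_pos_of_lt_pi (by linarith [hφ.1]) (by linarith [hφ.2])
  have habs_sign : |Real.sign ξ| = 1 := by
    rcases hξ0.lt_or_gt with h | h
    · rw [Real.sign_of_neg h]; norm_num
    · rw [Real.sign_of_pos h]; norm_num
  -- bound on (4πξ)²
  have hx1 : (4*π*ξ)^2 ≤ 1 := by
    have h1 : |ξ|^2 ≤ (1/(16*π))^2 := pow_le_pow_left₀ (abs_nonneg ξ) hξ 2
    have h2 : ξ^2 = |ξ|^2 := (sq_abs ξ).symm
    have h3 : (1/(16*π))^2 * (16*π)^2 = 1 := by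
      field_simp
    nlinarith [sq_nonneg π, mul_le_mul_of_nonneg_left h1 (le_of_lt (by positivity : (0:ℝ) < (16*π)^2))]
  set t := Real.sqrt (1 - (4*π*ξ)^2) with htdef
  have ht1 : t ≤ 1 := Real.sqrt_le_one.mpr (by nlinarith [sq_nonneg (4*π*ξ)])
  have ht0 : 0 ≤ t := Real.sqrt_nonneg _
  have ht2 : t^2 = 1 - (4*π*ξ)^2 := Real.sq_sqrt (by linarith)
  have hk : 0 ≤ (4*π)⁻¹ * (1 - t) := by
    have : (0:ℝ) ≤ (4*π)⁻¹ := by positivity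
    nlinarith
  have hnorm : ‖chiVec φ ξ‖ = (4*π)⁻¹ * (1 - t) * (2 * Real.sin (φ/2)) := by
    rw [chi_eq_aux φ ξ hξ0, norm_smul, norm_aux φ hφ, Real.norm_eq_abs, abs_mul,
      habs_sign, one_mul, abs_of_nonneg hk]
  refine ⟨?_, ?_, hnorm, ?_⟩
  · rw [chi_eq_aux φ ξ hξ0, real_inner_smul_left, inner_aux, mul_zero]
  · rw [chi_eq_aux φ (-ξ) (neg_ne_zero.mpr hξ0), chi_eq_aux φ ξ hξ0,
      show (4*π*(-ξ))^2 = (4*π*ξ)^2 by ring, Real.sign_neg, neg_mul, neg_smul]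
  · rw [hnorm]
    have key : (4*π*ξ)^2 / 2 ≤ 1 - t := by nlinarith [sq_nonneg (1 - t)]
    have h4 : (0:ℝ) < 4*π := by positivity
    rw [show (4*π)⁻¹ * (1 - t) * (2 * Real.sin (φ/2))
        = ((1 - t) * (2 * Real.sin (φ/2))) / (4*π) by field_simp,
      le_div_iff₀ h4]
    nlinarith [mul_le_mul_of_nonneg_right key (le_of_lt hs0)]
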